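/- Let σ : G ⇢ L be a regular support, r = rk(L), and let C ⊆ G be a non-trivial code (C ≠ {0} and C ≠ G) that is optimal, i.e. |C| = |G| / γ_σ(d − 1) where d = min{ω_σ(g) : g ∈ C, g ≠ 0}. Then the dual code C* ⊆ Ĝ has minimum weight d* = min{ω_{σ*}(χ) : χ ∈ C*, χ ≠ 1} satisfying d* ≥ r − d + 2, and C* is optimal for the dual support σ*, i.e. |C*| = |Ĝ| / γ_{σ*}(d* − 1). -/

import Mathlib

open Finset
open scoped Classical Pointwise

/-- A finite graded lattice of rank `r` (with rank function `ρ`) that is *regular*: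
the counting numbers `μ_≤`, `μ_≥` and the Möbius numbers `μ_L` depend only on ranks. -/
structure RegularLattice (L : Type*) [Lattice L] [BoundedOrder L] [Fintype L] where
  /-- the rank of the lattice -/
  r : ℕ
  /-- the rank function -/
  ρ : L → ℕ
  ρ_bot : ρ ⊥ = 0
  ρ_top : ρ ⊤ = r
  ρ_covby : ∀ S T : L, S ⋖ T → ρ T = ρ S + 1
  /-- the Möbius function of the lattice -/
  mu : L → L → ℤ
  mu_self : ∀ S : L, mu S S = 1
  mu_sum : ∀ S T : L, S < T → mu S T = - ∑ U : L, (if S ≤ U ∧ U < T then mu S U else 0)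
  /-- `μ_≤ s t` : the number of elements of rank `s` below an element of rank `t` -/
  muLE : ℕ → ℕ → ℕ
  card_le : ∀ (s : ℕ) (T : L), Nat.card {S : L // ρ S = s ∧ S ≤ T} = muLE s (ρ T)
  /-- `μ_≥ s t` : the number of elements of rank `s` above an element of rank `t` -/
  muGE : ℕ → ℕ → ℕ
  card_ge : ∀ (s : ℕ) (T : L), Nat.card {S : L // ρ S = s ∧ T ≤ S} = muGE s (ρ T)
  /-- `μ_L s t` : the common value of the Möbius function on pairs of ranks `s ≤ t`,
  with the convention `μ_L s t = 0` for `s > t` -/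
  muN : ℕ → ℕ → ℤ
  mu_eq : ∀ S T : L, S ≤ T → mu S T = muN (ρ S) (ρ T)
  muN_zero : ∀ s t : ℕ, t < s → muN s t = 0

/-- A regular support `σ : G ⇢ L` on a finite abelian group `G` with values in a
regular lattice `L`, together with its cardinality invariant `γ`. -/
structure RegularSupport (L : Type*) [Lattice L] [BoundedOrder L] [Fintype L]
    (G : Type*) [AddCommGroup G] [Fintype G] (RL : RegularLattice L) where
  /-- the support function -/
  σ : G → L
  supp_zero : ∀ g : G, σ g = ⊥ ↔ g = 0
  supp_neg : ∀ g : G, σ (-g) = σ g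
  supp_add : ∀ g₁ g₂ : G, σ (g₁ + g₂) ≤ σ g₁ ⊔ σ g₂
  supp_sup : ∀ S₁ S₂ : L,
    {g : G | σ g ≤ S₁ ⊔ S₂} = {g : G | σ g ≤ S₁} + {g : G | σ g ≤ S₂}
  /-- `γ s` : the common cardinality of `G_σ(S)` over elements `S` of rank `s` -/
  γ : ℕ → ℕ
  card_supp : ∀ S : L, Nat.card {g : G // σ g ≤ S} = γ (RL.ρ S)

/-- The dual support `σ* : Ĝ → L`, `σ*(χ) = ⋁ {S ∈ L : χ ∈ G_σ(S)*}`. -/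
noncomputable def RegularSupport.dualSupp {L : Type*} [Lattice L] [BoundedOrder L] [Fintype L]
    {G : Type*} [AddCommGroup G] [Fintype G] {RL : RegularLattice L}
    (RS : RegularSupport L G RL) (χ : AddChar G ℂˣ) : L :=
  (Finset.univ.filter (fun S : L => ∀ g : G, RS.σ g ≤ S → χ g = 1)).sup id

/-!
Let `K = G_σ(S)`. Whenever `ρ(S) < d`, minimality of `d` gives `C ∩ K = 0`.
For `ρ(S) = d − 1` optimality says `|C| · |K| = |G|`, so `G = C ⊕ K`; a character in `C*` with
`S ≤ σ*(χ)` kills both summands and is trivial. Hence `ρ(σ*(χ)) ≤ d − 2` for every nontrivial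
`χ ∈ C*`, which is the bound on `d*`. For `r − ρ(S) = d* − 1` the roles are exchanged: now
`ρ(S) < d` still gives `C ∩ K = 0`, and minimality of `d*` says that only the trivial character
kills `C + K`, so `C + K = G`. Thus again `G = C ⊕ K`, and counting annihilators gives
`|C*| · |K*| = |Ĝ|`, where `K* = {χ : S ≤ σ*(χ)}`.
-/

theorem Nat.mul_eq_of_cast_eq_div {a b c : ℕ} (ha : a ≠ 0) (h : (a : ℚ) = c / b) :
    a * b = c := by
  have hb : (b : ℚ) ≠ 0 := fun hb => ha (by simpa [hb] using h)
  rw [eq_div_iff hb] at h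
  exact_mod_cast h

namespace RegularLattice

variable {L : Type*} [Lattice L] [BoundedOrder L] [Fintype L] (RL : RegularLattice L)

theorem strictMono_ρ : StrictMono RL.ρ := by
  intro S T hST
  induction T using WellFoundedLT.induction with
  | _ T ih =>
    obtain ⟨U, hSU, hUT⟩ := exists_le_covBy_of_lt hST
    rw [RL.ρ_covby U T hUT]
    rcases hSU.eq_or_lt with rfl | hSU
    · exact Nat.lt_succ_self _
    · exact (ih U hUT.lt hSU).trans (Nat.lt_succ_self _)

theorem ρ_le_r (S : L) : RL.ρ S ≤ RL.r :=
  RL.ρ_top ▸ RL.strictMono_ρ.monotone le_top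

theorem exists_le_ρ_eq {T : L} {t : ℕ} (ht : t ≤ RL.ρ T) : ∃ S ≤ T, RL.ρ S = t := by
  induction T using WellFoundedLT.induction with
  | _ T ih =>
    rcases ht.eq_or_lt with ht | ht
    · exact ⟨T, le_rfl, ht.symm⟩
    · have hT : ⊥ < T := bot_lt_iff_ne_bot.mpr (by rintro rfl; rw [RL.ρ_bot] at ht; omega)
      obtain ⟨U, -, hUT⟩ := exists_le_covBy_of_lt hT
      obtain ⟨S, hSU, hS⟩ := ih U hUT.lt (by rw [RL.ρ_covby U T hUT] at ht; omega)
      exact ⟨S, hSU.trans hUT.le, hS⟩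

end RegularLattice

section Annihilator

variable {G : Type*} [AddCommGroup G]

theorem card_addChar_units_complex (A : Type*) [AddCommGroup A] [Finite A] :
    Nat.card (AddChar A ℂˣ) = Nat.card A := by
  have : NeZero (Monoid.exponent (Multiplicative A) : ℂ) :=
    ⟨Nat.cast_ne_zero.mpr Monoid.exponent_ne_zero_of_finite⟩
  obtain ⟨e⟩ := CommGroup.monoidHom_mulEquiv_of_hasEnoughRootsOfUnity (Multiplicative A) ℂ
  exact Nat.card_congr (AddChar.toMonoidHomEquiv.trans e.toEquiv)

noncomputable def annihilatorEquivAddCharQuotient (H : AddSubgroup G) :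
    {χ : AddChar G ℂˣ // ∀ g ∈ H, χ g = 1} ≃ AddChar (G ⧸ H) ℂˣ where
  toFun χ := AddChar.toAddMonoidHomEquiv.symm
    (QuotientAddGroup.lift H (AddChar.toAddMonoidHomEquiv χ.1)
      (fun g hg => by
        simp only [AddMonoidHom.mem_ker, AddChar.toAddMonoidHomEquiv_apply]
        rw [χ.2 g hg]; rfl))
  invFun ψ := ⟨ψ.compAddMonoidHom (QuotientAddGroup.mk' H), fun g hg => by
    rw [AddChar.compAddMonoidHom_apply, QuotientAddGroup.mk'_apply,
      (QuotientAddGroup.eq_zero_iff g).mpr hg, AddChar.map_zero_eq_one]⟩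
  left_inv χ := by
    ext g
    simp
  right_inv ψ := by
    ext x
    induction x using QuotientAddGroup.induction_on with
    | H g => simp

theorem card_annihilator_mul_card [Finite G] (H : AddSubgroup G) :
    Nat.card {χ : AddChar G ℂˣ // ∀ g ∈ H, χ g = 1} * Nat.card H = Nat.card G := by
  rw [Nat.card_congr (annihilatorEquivAddCharQuotient H), card_addChar_units_complex,
    ← AddSubgroup.card_eq_card_quotient_mul_card_addSubgroup]

theorem AddSubgroup.eq_top_of_forall_addChar_eq_one [Finite G] {H : AddSubgroup G}
    (h : ∀ χ : AddChar G ℂˣ, (∀ g ∈ H, χ g = 1) → χ = 1) : H = ⊤ := by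
  have : Unique {χ : AddChar G ℂˣ // ∀ g ∈ H, χ g = 1} :=
    { default := ⟨1, fun g _ => AddChar.one_apply g⟩
      uniq := fun χ => Subtype.ext (h χ χ.2) }
  have hcard := card_annihilator_mul_card H
  rw [Nat.card_unique, one_mul] at hcard
  exact H.eq_top_of_card_eq hcard

theorem AddChar.eq_one_of_sup_eq_top {M : Type*} [CommMonoid M] {H K : AddSubgroup G}
    (hHK : H ⊔ K = ⊤) {χ : AddChar G M} (hH : ∀ g ∈ H, χ g = 1) (hK : ∀ g ∈ K, χ g = 1) :
    χ = 1 := by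
  ext x
  obtain ⟨h, hh, k, hk, rfl⟩ := AddSubgroup.mem_sup.mp (hHK ▸ AddSubgroup.mem_top x)
  rw [AddChar.map_add_eq_mul, hH h hh, hK k hk, one_mul, AddChar.one_apply]

theorem AddSubgroup.isCompl_iff_card_mul_card_eq [Finite G] {H K : AddSubgroup G}
    (hHK : Disjoint H K) : IsCompl H K ↔ Nat.card H * Nat.card K = Nat.card G := by
  have hinj := AddSubgroup.add_injective_of_disjoint hHK
  calc IsCompl H K ↔ Function.Surjective (fun x : H × K => (x.1 : G) + x.2) := by
        rw [isCompl_iff, and_iff_right hHK, codisjoint_iff, AddSubgroup.eq_top_iff']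
        simp only [← SetLike.mem_coe, AddSubgroup.add_normal, Set.mem_add, Function.Surjective,
          Prod.exists, Subtype.exists, exists_prop]
    _ ↔ Function.Bijective (fun x : H × K => (x.1 : G) + x.2) := (and_iff_right hinj).symm
    _ ↔ _ := by rw [Nat.bijective_iff_injective_and_card, and_iff_right hinj, Nat.card_prod]

theorem card_annihilator_mul_card_annihilator [Finite G] {H K : AddSubgroup G}
    (hHK : IsCompl H K) :
    Nat.card {χ : AddChar G ℂˣ // ∀ g ∈ H, χ g = 1} *
      Nat.card {χ : AddChar G ℂˣ // ∀ g ∈ K, χ g = 1} = Nat.card (AddChar G ℂˣ) := by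
  have hH := card_annihilator_mul_card H
  have hK := card_annihilator_mul_card K
  rw [card_addChar_units_complex]
  refine Nat.eq_of_mul_eq_mul_right (Nat.card_pos (α := G)) ?_
  calc _ = (Nat.card {χ : AddChar G ℂˣ // ∀ g ∈ H, χ g = 1} * Nat.card H) *
        (Nat.card {χ : AddChar G ℂˣ // ∀ g ∈ K, χ g = 1} * Nat.card K) := by
          rw [← (AddSubgroup.isCompl_iff_card_mul_card_eq hHK.disjoint).mp hHK]; ring
    _ = _ := by rw [hH, hK]

end Annihilator

namespace RegularSupport

variable {L : Type*} [Lattice L] [BoundedOrder L] [Fintype L]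
  {G : Type*} [AddCommGroup G] [Fintype G] {RL : RegularLattice L} (RS : RegularSupport L G RL)

def suppSubgroup (S : L) : AddSubgroup G where
  carrier := {g | RS.σ g ≤ S}
  zero_mem' := by simp [(RS.supp_zero 0).mpr rfl]
  add_mem' {a b} ha hb := (RS.supp_add a b).trans (sup_le ha hb)
  neg_mem' {a} ha := by simpa [RS.supp_neg] using ha

theorem card_suppSubgroup (S : L) : Nat.card (RS.suppSubgroup S) = RS.γ (RL.ρ S) :=
  RS.card_supp S

theorem ρ_σ_pos {g : G} (hg : g ≠ 0) : 0 < RL.ρ (RS.σ g) := by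
  rw [← RL.ρ_bot]
  exact RL.strictMono_ρ (bot_lt_iff_ne_bot.mpr (mt (RS.supp_zero g).mp hg))

theorem le_dualSupp_iff (χ : AddChar G ℂˣ) (S : L) :
    S ≤ RS.dualSupp χ ↔ ∀ g ∈ RS.suppSubgroup S, χ g = 1 := by
  refine ⟨fun hS g hg => ?_, fun h =>
    Finset.le_sup (f := id) (Finset.mem_filter.mpr ⟨Finset.mem_univ S, h⟩)⟩
  suffices ∀ g, RS.σ g ≤ RS.dualSupp χ → χ g = 1 from this g (hg.trans hS)
  refine Finset.sup_induction (p := fun T : L => ∀ g : G, RS.σ g ≤ T → χ g = 1) ?_ ?_ ?_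
  · intro g hg
    rw [(RS.supp_zero g).mp (le_bot_iff.mp hg), AddChar.map_zero_eq_one]
  · intro S₁ h₁ S₂ h₂ g hg
    have hg : g ∈ {g : G | RS.σ g ≤ S₁ ⊔ S₂} := hg
    rw [RS.supp_sup] at hg
    obtain ⟨a, ha, b, hb, rfl⟩ := Set.mem_add.mp hg
    rw [AddChar.map_add_eq_mul, h₁ a ha, h₂ b hb, one_mul]
  · intro T hT
    simpa using hT

variable {RS} {C : AddSubgroup G} {d : ℕ}

theorem disjoint_suppSubgroup
    (hd : d ∈ lowerBounds {n | ∃ g ∈ C, g ≠ 0 ∧ RL.ρ (RS.σ g) = n}) {S : L} (hS : RL.ρ S < d) :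
    Disjoint C (RS.suppSubgroup S) := by
  refine AddSubgroup.disjoint_def.mpr fun {g} hgC hgS => ?_
  by_contra hg
  have := hd ⟨g, hgC, hg, rfl⟩
  have := RL.strictMono_ρ.monotone hgS
  omega

theorem isCompl_suppSubgroup_of_optimal
    (hd : IsLeast {n | ∃ g ∈ C, g ≠ 0 ∧ RL.ρ (RS.σ g) = n} d)
    (hopt : Nat.card C * RS.γ (d - 1) = Nat.card G) {S : L} (hS : RL.ρ S = d - 1) :
    IsCompl C (RS.suppSubgroup S) := by
  obtain ⟨g, -, hg, rfl⟩ := hd.1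
  have := RS.ρ_σ_pos hg
  rw [AddSubgroup.isCompl_iff_card_mul_card_eq (disjoint_suppSubgroup hd.2 (by omega))]
  rwa [RS.card_suppSubgroup, hS]

theorem ρ_dualSupp_add_two_le (hd : IsLeast {n | ∃ g ∈ C, g ≠ 0 ∧ RL.ρ (RS.σ g) = n} d)
    (hopt : Nat.card C * RS.γ (d - 1) = Nat.card G) {χ : AddChar G ℂˣ}
    (hχC : ∀ g ∈ C, χ g = 1) (hχ : χ ≠ 1) : RL.ρ (RS.dualSupp χ) + 2 ≤ d := by
  by_contra! h
  obtain ⟨S, hSχ, hS⟩ := RL.exists_le_ρ_eq (T := RS.dualSupp χ) (t := d - 1) (by omega)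
  exact hχ (AddChar.eq_one_of_sup_eq_top
    (isCompl_suppSubgroup_of_optimal hd hopt hS).sup_eq_top hχC
    ((RS.le_dualSupp_iff χ S).mp hSχ))

theorem isCompl_suppSubgroup_of_dual {dstar : ℕ}
    (hd : d ∈ lowerBounds {n | ∃ g ∈ C, g ≠ 0 ∧ RL.ρ (RS.σ g) = n})
    (hds : dstar ∈ lowerBounds {n | ∃ χ : AddChar G ℂˣ,
      (∀ g ∈ C, χ g = 1) ∧ χ ≠ 1 ∧ RL.r - RL.ρ (RS.dualSupp χ) = n})
    {S : L} (hSd : RL.ρ S < d) (hSds : RL.r - RL.ρ S < dstar) :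
    IsCompl C (RS.suppSubgroup S) := by
  refine ⟨disjoint_suppSubgroup hd hSd, codisjoint_iff.mpr ?_⟩
  refine AddSubgroup.eq_top_of_forall_addChar_eq_one fun χ hχ => ?_
  by_contra hne
  have hSχ : S ≤ RS.dualSupp χ :=
    (RS.le_dualSupp_iff χ S).mpr fun g hg => hχ g (AddSubgroup.mem_sup_right hg)
  have := hds ⟨χ, fun g hg => hχ g (AddSubgroup.mem_sup_left hg), hne, rfl⟩
  have := RL.strictMono_ρ.monotone hSχ
  omega

end RegularSupport

theorem stmt_15_general {L : Type*} [Lattice L] [BoundedOrder L] [Fintype L]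
    {G : Type*} [AddCommGroup G] [Fintype G] {RL : RegularLattice L}
    (RS : RegularSupport L G RL) (C : AddSubgroup G)
    (d : ℕ) (hd : IsLeast {n : ℕ | ∃ g ∈ C, g ≠ 0 ∧ RL.ρ (RS.σ g) = n} d)
    (hopt : (Nat.card C : ℚ) = (Fintype.card G : ℚ) / (RS.γ (d - 1) : ℚ))
    (dstar : ℕ)
    (hds : IsLeast {n : ℕ | ∃ χ : AddChar G ℂˣ,
      (∀ g ∈ C, χ g = 1) ∧ χ ≠ 1 ∧ RL.r - RL.ρ (RS.dualSupp χ) = n} dstar) :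
    RL.r - d + 2 ≤ dstar ∧
    ∀ S : L, RL.r - RL.ρ S = dstar - 1 →
      (Nat.card {χ : AddChar G ℂˣ // ∀ g ∈ C, χ g = 1} : ℚ)
        = (Nat.card (AddChar G ℂˣ) : ℚ)
            / (Nat.card {χ : AddChar G ℂˣ // S ≤ RS.dualSupp χ} : ℚ) := by
  replace hopt : Nat.card C * RS.γ (d - 1) = Nat.card G :=
    Nat.card_eq_fintype_card (α := G) ▸ Nat.mul_eq_of_cast_eq_div Nat.card_pos.ne' hopt
  obtain ⟨χ₀, hχ₀C, hχ₀, rfl⟩ := hds.1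
  have hχ₀d := RS.ρ_dualSupp_add_two_le hd hopt hχ₀C hχ₀
  have hdr : d ≤ RL.r := by
    obtain ⟨g, -, -, hg⟩ := hd.1
    exact hg ▸ RL.ρ_le_r _
  refine ⟨by omega, fun S hS => ?_⟩
  have hSr := RL.ρ_le_r S
  have hCK := card_annihilator_mul_card_annihilator
    (RegularSupport.isCompl_suppSubgroup_of_dual hd.2 hds.2 (S := S) (by omega) (by omega))
  have hK : Nat.card {χ : AddChar G ℂˣ // S ≤ RS.dualSupp χ}
      = Nat.card {χ : AddChar G ℂˣ // ∀ g ∈ RS.suppSubgroup S, χ g = 1} :=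
    Nat.card_congr (Equiv.subtypeEquivRight fun χ => RS.le_dualSupp_iff χ S)
  have hĜ : 0 < Nat.card (AddChar G ℂˣ) := card_addChar_units_complex G ▸ Nat.card_pos
  rw [hK, ← hCK, Nat.cast_mul, mul_div_cancel_right₀]
  exact_mod_cast right_ne_zero_of_mul (hCK ▸ hĜ.ne')

/-- If `C ⊆ G` is a non-trivial optimal code (`|C| = |G| / γ_σ(d − 1)` where `d` is the
minimum weight of `C`), then the minimum weight `d*` of the dual code `C*` satisfies
`d* ≥ r − d + 2`, and `C*` is optimal for the dual support: `|C*| = |Ĝ| / γ_{σ*}(d* − 1)`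
(where `γ_{σ*}(d* − 1) = |Ĝ_{σ*}(S)|` for any `S` with `r − ρ(S) = d* − 1`).
Here `ω_σ(g) = ρ(σ(g))` and `ω_{σ*}(χ) = r − ρ(σ*(χ))`. -/
theorem stmt_15 {L : Type*} [Lattice L] [BoundedOrder L] [Fintype L]
    {G : Type*} [AddCommGroup G] [Fintype G] {RL : RegularLattice L}
    (RS : RegularSupport L G RL) (C : AddSubgroup G) (hC₁ : C ≠ ⊥) (hC₂ : C ≠ ⊤)
    (d : ℕ) (hd : IsLeast {n : ℕ | ∃ g ∈ C, g ≠ 0 ∧ RL.ρ (RS.σ g) = n} d)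
    (hopt : (Nat.card C : ℚ) = (Fintype.card G : ℚ) / (RS.γ (d - 1) : ℚ))
    (dstar : ℕ)
    (hds : IsLeast {n : ℕ | ∃ χ : AddChar G ℂˣ,
      (∀ g ∈ C, χ g = 1) ∧ χ ≠ 1 ∧ RL.r - RL.ρ (RS.dualSupp χ) = n} dstar) :
    RL.r - d + 2 ≤ dstar ∧
    ∀ S : L, RL.r - RL.ρ S = dstar - 1 →
      (Nat.card {χ : AddChar G ℂˣ // ∀ g ∈ C, χ g = 1} : ℚ)
        = (Nat.card (AddChar G ℂˣ) : ℚ)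
            / (Nat.card {χ : AddChar G ℂˣ // S ≤ RS.dualSupp χ} : ℚ) :=
  stmt_15_general RS C d hd hopt dstar hds
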